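/- arXiv:2103.13062 — 2 statements merged into one kernel-verified Lean document; each statement's English description precedes it below -/
import Mathlib

section
/- Let S be a Cu-semigroup satisfying (O5) and let T_0 ⊆ S be a countably based sub-Cu-semigroup. Then there exists a countably based sub-Cu-semigroup T ⊆ S satisfying (O5) with T_0 ⊆ T. -/
def WayBelow {S : Type*} [PartialOrder S] (x y : S) : Prop :=
  ∀ f : ℕ → S, Monotone f → ∀ z : S, IsLUB (Set.range f) z → y ≤ z → ∃ n, x ≤ f n

class CuSemigroup (S : Type*) [AddCommMonoid S] [PartialOrder S] : Prop where
  zero_le : ∀ x : S, 0 ≤ x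
  add_le_add_left : ∀ x y : S, x ≤ y → ∀ z : S, z + x ≤ z + y
  exists_sup : ∀ f : ℕ → S, Monotone f → ∃ z : S, IsLUB (Set.range f) z
  exists_wb_seq : ∀ x : S, ∃ f : ℕ → S, (∀ n, WayBelow (f n) (f (n + 1))) ∧ IsLUB (Set.range f) x
  wb_add : ∀ x' x y' y : S, WayBelow x' x → WayBelow y' y → WayBelow (x' + y') (x + y)
  sup_add : ∀ f g : ℕ → S, Monotone f → Monotone g → ∀ a b : S,
    IsLUB (Set.range f) a → IsLUB (Set.range g) b →
    IsLUB (Set.range fun n => f n + g n) (a + b)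

def cuDerivedSet {S : Type*} [PartialOrder S] (T : Set S) : Set S :=
  { s | ∃ f : ℕ → S, (∀ n, f n ∈ T) ∧ (∀ n, WayBelow (f n) (f (n + 1))) ∧ IsLUB (Set.range f) s }

def SupClosedSet {S : Type*} [PartialOrder S] (T : Set S) : Prop :=
  ∀ f : ℕ → S, Monotone f → (∀ n, f n ∈ T) → ∀ z : S, IsLUB (Set.range f) z → z ∈ T

def IsSubCu {S : Type*} [AddCommMonoid S] [PartialOrder S] (T : AddSubmonoid S) : Prop :=
  CuSemigroup T ∧
  (∀ f : ℕ → T, Monotone f → ∀ z : T, IsLUB (Set.range f) z →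
    IsLUB (Set.range fun n => (f n : S)) (z : S)) ∧
  (∀ x y : T, WayBelow x y → WayBelow (x : S) (y : S))

def CountablyBased (S : Type*) [PartialOrder S] : Prop :=
  ∃ B : Set S, B.Countable ∧ ∀ x' x : S, WayBelow x' x → ∃ b ∈ B, WayBelow x' b ∧ WayBelow b x

def O5 (S : Type*) [AddCommMonoid S] [PartialOrder S] : Prop :=
  ∀ x' x y' y z : S, x + y ≤ z → WayBelow x' x → WayBelow y' y →
    ∃ c : S, x' + c ≤ z ∧ z ≤ x + c ∧ WayBelow y' c

section AuxOrder

variable {S : Type*} [PartialOrder S]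

theorem isLUB_const {c : S} : IsLUB (Set.range fun _ : ℕ => c) c := by
  have : (Set.range fun _ : ℕ => c) = {c} := Set.range_const
  rw [this]; exact isLUB_singleton

theorem wayBelow_le {x y : S} (h : WayBelow x y) : x ≤ y := by
  obtain ⟨n, hn⟩ := h (fun _ => y) monotone_const y isLUB_const le_rfl
  exact hn

theorem le_wayBelow {x y z : S} (hxy : x ≤ y) (h : WayBelow y z) : WayBelow x z := by
  intro f hf w hw hle
  obtain ⟨n, hn⟩ := h f hf w hw hle
  exact ⟨n, hxy.trans hn⟩

theorem wayBelow_le_trans {x y z : S} (h : WayBelow x y) (hyz : y ≤ z) : WayBelow x z := by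
  intro f hf w hw hle
  exact h f hf w hw (hyz.trans hle)

theorem monotone_of_wb {f : ℕ → S} (h : ∀ n, WayBelow (f n) (f (n+1))) : Monotone f :=
  monotone_nat_of_le_succ fun n => wayBelow_le (h n)

theorem isLUB_sandwich {f g : ℕ → S} (h1 : ∀ n, f n ≤ g n) (h2 : ∀ n, g n ≤ f (n+1))
    {z : S} (hz : IsLUB (Set.range f) z) : IsLUB (Set.range g) z := by
  constructor
  · rintro _ ⟨n, rfl⟩
    exact (h2 n).trans (hz.1 ⟨n+1, rfl⟩)
  · intro u hu
    apply hz.2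
    rintro _ ⟨n, rfl⟩
    exact (h1 n).trans (hu ⟨n, rfl⟩)

theorem isLUB_subtype_of_coe {p : S → Prop} {f : ℕ → Subtype p} {z : Subtype p}
    (h : IsLUB (Set.range fun n => (f n : S)) (z : S)) : IsLUB (Set.range f) z := by
  constructor
  · rintro _ ⟨n, rfl⟩
    exact Subtype.coe_le_coe.mp (h.1 ⟨n, rfl⟩)
  · intro w hw
    rw [← Subtype.coe_le_coe]
    apply h.2
    rintro _ ⟨n, rfl⟩
    exact Subtype.coe_le_coe.mpr (hw ⟨n, rfl⟩)

end AuxOrder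

section AuxCu

variable {S : Type*} [AddCommMonoid S] [PartialOrder S] [CuSemigroup S]

theorem zero_wayBelow (x : S) : WayBelow (0 : S) x := by
  intro f _ z _ _
  exact ⟨0, CuSemigroup.zero_le _⟩

theorem cu_add_le_add {a b c d : S} (h1 : a ≤ b) (h2 : c ≤ d) : a + c ≤ b + d := by
  calc a + c ≤ a + d := CuSemigroup.add_le_add_left _ _ h2 _
    _ = d + a := add_comm _ _
    _ ≤ d + b := CuSemigroup.add_le_add_left _ _ h1 _
    _ = b + d := add_comm _ _

theorem isLUB_const_add {c : S} {g : ℕ → S} (hg : Monotone g) {b : S}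
    (hb : IsLUB (Set.range g) b) : IsLUB (Set.range fun n => c + g n) (c + b) :=
  CuSemigroup.sup_add _ g monotone_const hg c b isLUB_const hb

end AuxCu

theorem exists_countablyBased_subCu_O5 {S : Type*} [AddCommMonoid S] [PartialOrder S]
    [CuSemigroup S] (h5 : O5 S) (T0 : AddSubmonoid S) (h0 : IsSubCu T0)
    (hcb : CountablyBased ↥T0) :
    ∃ T : AddSubmonoid S, IsSubCu T ∧ CountablyBased ↥T ∧ O5 ↥T ∧ T0 ≤ T := by
  classical
  obtain ⟨B0, hB0c, hB0basis⟩ := hcb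
  choose appr happrWB happrLUB using (CuSemigroup.exists_wb_seq (S := S))
  have happrle : ∀ x : S, ∀ n, appr x n ≤ x := fun x n => (happrLUB x).1 ⟨n, rfl⟩
  have happrmono : ∀ x : S, Monotone (appr x) := fun x => monotone_of_wb (happrWB x)
  have hwex : ∀ x' x y' y z : S, ∃ c : S,
      (x + y ≤ z ∧ WayBelow x' x ∧ WayBelow y' y) →
      (x' + c ≤ z ∧ z ≤ x + c ∧ WayBelow y' c) := by
    intro x' x y' y z
    by_cases h : x + y ≤ z ∧ WayBelow x' x ∧ WayBelow y' y
    · obtain ⟨c, hc⟩ := h5 x' x y' y z h.1 h.2.1 h.2.2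
      exact ⟨c, fun _ => hc⟩
    · exact ⟨0, fun hh => absurd hh h⟩
  choose w hwspec using hwex
  -- the countable closed generating set
  set next : Set S → Set S := fun A =>
    A ∪ Set.image2 (· + ·) A A ∪ (⋃ k, (fun b => appr b k) '' A) ∪
    ((fun q : S × S × S × S × S => w q.1 q.2.1 q.2.2.1 q.2.2.2.1 q.2.2.2.2) ''
      (A ×ˢ A ×ˢ A ×ˢ A ×ˢ A)) with hnext
  have hnextA : ∀ A : Set S, A ⊆ next A ∧ (∀ x y : S, x ∈ A → y ∈ A → x + y ∈ next A) ∧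
      (∀ (x : S) (k : ℕ), x ∈ A → appr x k ∈ next A) ∧
      (∀ p q r s t : S, p ∈ A → q ∈ A → r ∈ A → s ∈ A → t ∈ A → w p q r s t ∈ next A) := by
    intro A
    refine ⟨fun x hx => Or.inl (Or.inl (Or.inl hx)), ?_, ?_, ?_⟩
    · intro x y hx hy
      exact Or.inl (Or.inl (Or.inr (Set.mem_image2_of_mem hx hy)))
    · intro x k hx
      exact Or.inl (Or.inr (Set.mem_iUnion.mpr ⟨k, ⟨x, hx, rfl⟩⟩))
    · intro p q r s t hp hq hr hs ht
      exact Or.inr ⟨(p, q, r, s, t), ⟨hp, hq, hr, hs, ht⟩, rfl⟩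
  set B : Set S := ⋃ n, next^[n] ((Subtype.val '' B0) ∪ {0}) with hBdef
  have hlevmono : ∀ m n : ℕ, m ≤ n →
      next^[m] ((Subtype.val '' B0) ∪ {0}) ⊆ next^[n] ((Subtype.val '' B0) ∪ {0}) := by
    intro m n hmn
    induction hmn with
    | refl => exact subset_rfl
    | step h ih =>
      rw [Function.iterate_succ_apply']
      exact ih.trans (hnextA _).1
  have hlevB : ∀ n : ℕ, next^[n] ((Subtype.val '' B0) ∪ {0}) ⊆ B :=
    fun n => Set.subset_iUnion (fun n => next^[n] ((Subtype.val '' B0) ∪ {0})) n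
  have hBlevels : ∀ x : S, x ∈ B → ∃ n, x ∈ next^[n] ((Subtype.val '' B0) ∪ {0}) := by
    intro x hx
    exact Set.mem_iUnion.mp hx
  have hBadd : ∀ x y : S, x ∈ B → y ∈ B → x + y ∈ B := by
    intro x y hx hy
    obtain ⟨m, hm⟩ := hBlevels x hx
    obtain ⟨n, hn⟩ := hBlevels y hy
    have hm' := hlevmono m (max m n) (le_max_left _ _) hm
    have hn' := hlevmono n (max m n) (le_max_right _ _) hn
    apply hlevB (max m n + 1)
    rw [Function.iterate_succ_apply']
    exact (hnextA _).2.1 x y hm' hn'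
  have hBappr : ∀ (x : S) (k : ℕ), x ∈ B → appr x k ∈ B := by
    intro x k hx
    obtain ⟨m, hm⟩ := hBlevels x hx
    apply hlevB (m + 1)
    rw [Function.iterate_succ_apply']
    exact (hnextA _).2.2.1 x k hm
  have hBw : ∀ p q r s t : S, p ∈ B → q ∈ B → r ∈ B → s ∈ B → t ∈ B →
      w p q r s t ∈ B := by
    intro p q r s t hp hq hr hs ht
    obtain ⟨np, hp⟩ := hBlevels p hp
    obtain ⟨nq, hq⟩ := hBlevels q hq
    obtain ⟨nr, hr⟩ := hBlevels r hr
    obtain ⟨ns, hs⟩ := hBlevels s hs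
    obtain ⟨nt, ht⟩ := hBlevels t ht
    set m := max (max (max (max np nq) nr) ns) nt with hmdef
    apply hlevB (m + 1)
    rw [Function.iterate_succ_apply']
    refine (hnextA _).2.2.2 p q r s t ?_ ?_ ?_ ?_ ?_
    · exact hlevmono _ m (by omega) hp
    · exact hlevmono _ m (by omega) hq
    · exact hlevmono _ m (by omega) hr
    · exact hlevmono _ m (by omega) hs
    · exact hlevmono _ m (by omega) ht
  have hBcount : B.Countable := by
    apply Set.countable_iUnion
    intro n
    induction n with
    | zero =>
      exact (hB0c.image _).union (Set.countable_singleton 0)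
    | succ n ih =>
      rw [Function.iterate_succ_apply']
      refine (((ih.union (ih.image2 ih _)).union
        (Set.countable_iUnion fun k => ih.image _)).union ?_)
      exact ((ih.prod (ih.prod (ih.prod (ih.prod ih)))).image _)
  set T' : Set S := cuDerivedSet B with hT'def
  have hBT' : ∀ b : S, b ∈ B → b ∈ T' := by
    intro b hb
    exact ⟨appr b, fun n => hBappr b n hb, happrWB b, happrLUB b⟩
  have hzeroB : (0 : S) ∈ B := hlevB 0 (Or.inr rfl)
  have hT'add : ∀ x y : S, x ∈ T' → y ∈ T' → x + y ∈ T' := by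
    rintro x y ⟨p, hpB, hpWB, hpL⟩ ⟨q, hqB, hqWB, hqL⟩
    exact ⟨fun n => p n + q n, fun n => hBadd _ _ (hpB n) (hqB n),
      fun n => CuSemigroup.wb_add _ _ _ _ (hpWB n) (hqWB n),
      CuSemigroup.sup_add p q (monotone_of_wb hpWB) (monotone_of_wb hqWB) x y hpL hqL⟩
  set T : AddSubmonoid S :=
    { carrier := T'
      add_mem' := fun ha hb => hT'add _ _ ha hb
      zero_mem' := hBT' 0 hzeroB } with hTdef
  have hmemT : ∀ s : S, s ∈ T ↔ s ∈ T' := fun s => Iff.rfl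
  -- sup-closedness of T' (diagonal argument)
  have hsupclosed : ∀ t : ℕ → S, Monotone t → (∀ k, t k ∈ T') → ∀ z : S,
      IsLUB (Set.range t) z → z ∈ T' := by
    intro t ht htT z hz
    choose x hxB hxWB hxL using htT
    have hxmono : ∀ k, Monotone (x k) := fun k => monotone_of_wb (hxWB k)
    have hxle : ∀ k n, x k n ≤ t k := fun k n => (hxL k).1 ⟨n, rfl⟩
    have hxlez : ∀ k n, x k n ≤ z := fun k n => (hxle k n).trans (hz.1 ⟨k, rfl⟩)
    have hstep : ∀ p q : ℕ × ℕ, ∃ r : ℕ × ℕ,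
        WayBelow (x p.1 p.2) (x r.1 r.2) ∧ x q.1 q.2 ≤ x r.1 r.2 ∧ x r.1 r.2 ≤ z := by
      rintro ⟨k1, n1⟩ ⟨k2, n2⟩
      obtain ⟨K1, hK1⟩ := hxWB k1 (n1+1) t ht z hz (hxlez k1 (n1+2))
      obtain ⟨K2, hK2⟩ := hxWB k2 (n2+1) t ht z hz (hxlez k2 (n2+2))
      set K := max K1 K2 with hK
      obtain ⟨m1, hm1⟩ := hxWB k1 n1 (x K) (hxmono K) (t K) (hxL K)
        (hK1.trans (ht (le_max_left _ _)))
      obtain ⟨m2, hm2⟩ := hxWB k2 n2 (x K) (hxmono K) (t K) (hxL K)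
        (hK2.trans (ht (le_max_right _ _)))
      refine ⟨(K, max m1 m2 + 1), ?_, ?_, hxlez K _⟩
      · exact le_wayBelow (hm1.trans (hxmono K (le_max_left _ _))) (hxWB K (max m1 m2))
      · exact (hm2.trans (hxmono K (le_max_right _ _))).trans
          (wayBelow_le (hxWB K (max m1 m2)))
    choose g hg1 hg2 hg3 using hstep
    set F : ℕ → ℕ × ℕ := fun j => Nat.rec ((0 : ℕ), (0 : ℕ))
      (fun j p => g p (Nat.unpair j)) j with hF
    have hFsucc : ∀ j, F (j+1) = g (F j) (Nat.unpair j) := fun j => rfl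
    set c : ℕ → S := fun j => x (F j).1 (F j).2 with hc
    have hcWB : ∀ j, WayBelow (c j) (c (j+1)) := by
      intro j
      rw [hc]
      simp only [hFsucc j]
      exact hg1 (F j) (Nat.unpair j)
    have hcB : ∀ j, c j ∈ B := fun j => hxB _ _
    have hcatch : ∀ k n, x k n ≤ c (Nat.pair k n + 1) := by
      intro k n
      rw [hc]
      simp only [hFsucc, Nat.unpair_pair]
      exact hg2 (F (Nat.pair k n)) (k, n)
    have hcz : ∀ j, c j ≤ z := by
      intro j
      cases j with
      | zero => exact hxlez _ _
      | succ j =>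
        have h := hg3 (F j) (Nat.unpair j)
        rw [hc]; simp only [hFsucc]; exact h
    refine ⟨c, hcB, hcWB, ?_, ?_⟩
    · rintro _ ⟨j, rfl⟩
      exact hcz j
    · intro u hu
      apply hz.2
      rintro _ ⟨k, rfl⟩
      apply (hxL k).2
      rintro _ ⟨n, rfl⟩
      exact (hcatch k n).trans (hu ⟨Nat.pair k n + 1, rfl⟩)
  have hcoemono : ∀ f : ℕ → ↥T, Monotone f → Monotone (fun n => (f n : S)) :=
    fun f hf a b hab => Subtype.coe_le_coe.mpr (hf hab)
  have hLUBdown : ∀ f : ℕ → ↥T, Monotone f → ∀ z : ↥T, IsLUB (Set.range f) z →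
      IsLUB (Set.range fun n => (f n : S)) (z : S) := by
    intro f hf z hlub
    obtain ⟨z', hz'⟩ := CuSemigroup.exists_sup _ (hcoemono f hf)
    have hz'T : z' ∈ T' := hsupclosed _ (hcoemono f hf) (fun k => (f k).2) z' hz'
    have h2 : IsLUB (Set.range f) (⟨z', hz'T⟩ : ↥T) := isLUB_subtype_of_coe hz'
    have h3 := hlub.unique h2
    rw [h3]
    exact hz'
  have hwbST : ∀ a b : ↥T, WayBelow (a : S) (b : S) → WayBelow a b := by
    intro a b h f hf ζ hζ hle
    obtain ⟨n, hn⟩ := h (fun n => (f n : S)) (hcoemono f hf) _ (hLUBdown f hf ζ hζ)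
      (Subtype.coe_le_coe.mpr hle)
    exact ⟨n, Subtype.coe_le_coe.mp hn⟩
  have hTseq : ∀ b : ↥T, ∃ q : ℕ → S, (∀ n, q n ∈ B) ∧ (∀ n, WayBelow (q n) (q (n+1))) ∧
      IsLUB (Set.range q) (b : S) := fun b => b.2
  have hwbTS : ∀ a b : ↥T, WayBelow a b → WayBelow (a : S) (b : S) := by
    intro a b h
    obtain ⟨q, hqB, hqWB, hqL⟩ := hTseq b
    set fT : ℕ → ↥T := fun n => ⟨q n, hBT' _ (hqB n)⟩ with hfT
    have hfTmono : Monotone fT := fun i j hij =>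
      Subtype.coe_le_coe.mp (monotone_of_wb hqWB hij)
    have hfTL : IsLUB (Set.range fT) b := isLUB_subtype_of_coe hqL
    obtain ⟨n, hn⟩ := h fT hfTmono b hfTL le_rfl
    have hn' : (a : S) ≤ q n := hn
    exact le_wayBelow hn' (wayBelow_le_trans (hqWB n) (hqL.1 ⟨n+1, rfl⟩))
  have hCuT : CuSemigroup ↥T := by
    refine ⟨?_, ?_, ?_, ?_, ?_, ?_⟩
    · intro a
      exact Subtype.coe_le_coe.mp (CuSemigroup.zero_le (a : S))
    · intro a b hab c
      exact Subtype.coe_le_coe.mp (CuSemigroup.add_le_add_left (a : S) b hab c)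
    · intro f hf
      obtain ⟨z', hz'⟩ := CuSemigroup.exists_sup _ (hcoemono f hf)
      have hz'T : z' ∈ T' := hsupclosed _ (hcoemono f hf) (fun k => (f k).2) z' hz'
      exact ⟨⟨z', hz'T⟩, isLUB_subtype_of_coe hz'⟩
    · intro a
      obtain ⟨q, hqB, hqWB, hqL⟩ := hTseq a
      refine ⟨fun n => ⟨q n, hBT' _ (hqB n)⟩, fun n => hwbST _ _ (hqWB n),
        isLUB_subtype_of_coe hqL⟩
    · intro x' x y' y h1 h2
      exact hwbST _ _ (CuSemigroup.wb_add _ _ _ _ (hwbTS _ _ h1) (hwbTS _ _ h2))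
    · intro f g hf hg a b ha hb
      have h := CuSemigroup.sup_add _ _ (hcoemono f hf) (hcoemono g hg) _ _
        (hLUBdown f hf a ha) (hLUBdown g hg b hb)
      exact isLUB_subtype_of_coe h
  have hCB : CountablyBased ↥T := by
    refine ⟨{b : ↥T | (b : S) ∈ B}, hBcount.preimage Subtype.coe_injective, ?_⟩
    intro x' x hwb
    obtain ⟨q, hqB, hqWB, hqL⟩ := hTseq x
    set fT : ℕ → ↥T := fun n => ⟨q n, hBT' _ (hqB n)⟩ with hfT
    have hfTmono : Monotone fT := fun i j hij =>
      Subtype.coe_le_coe.mp (monotone_of_wb hqWB hij)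
    have hfTL : IsLUB (Set.range fT) x := isLUB_subtype_of_coe hqL
    obtain ⟨n, hn⟩ := hwb fT hfTmono x hfTL le_rfl
    have hn' : (x' : S) ≤ q n := hn
    refine ⟨⟨q (n+1), hBT' _ (hqB (n+1))⟩, hqB (n+1), ?_, ?_⟩
    · exact hwbST _ _ (le_wayBelow hn' (hqWB n))
    · exact hwbST _ _ (wayBelow_le_trans (hqWB (n+1)) (hqL.1 ⟨n+2, rfl⟩))
  have hT0T : T0 ≤ T := by
    intro s hs
    obtain ⟨hCu0, hlub0, hwb0⟩ := h0
    obtain ⟨f, hfWB, hfL⟩ := hCu0.exists_wb_seq (⟨s, hs⟩ : ↥T0)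
    choose g hgB0 hg1 hg2 using fun n => hB0basis _ _ (hfWB n)
    have hfmono : Monotone f := monotone_of_wb hfWB
    have hfLS : IsLUB (Set.range fun n => (f n : S)) s := hlub0 f hfmono _ hfL
    have hgWB : ∀ n, WayBelow ((g n : T0) : S) ((g (n+1) : T0) : S) :=
      fun n => hwb0 _ _ (wayBelow_le_trans (hg2 n) (wayBelow_le (hg1 (n+1))))
    have hgLS : IsLUB (Set.range fun n => ((g n : T0) : S)) s := by
      refine isLUB_sandwich (f := fun n => (f n : S)) ?_ ?_ hfLS
      · exact fun n => Subtype.coe_le_coe.mpr (wayBelow_le (hg1 n))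
      · exact fun n => Subtype.coe_le_coe.mpr (wayBelow_le (hg2 n))
    exact ⟨fun n => (g n : T0), fun n => hlevB 0 (Or.inl ⟨g n, hgB0 n, rfl⟩), hgWB, hgLS⟩
  have hO5T : O5 ↥T := by
    intro x' x y' y z hxyz hx hy
    obtain ⟨a, haB, haWB, haL⟩ := hTseq x
    obtain ⟨b, hbB, hbWB, hbL⟩ := hTseq y
    obtain ⟨e, heB, heWB, heL⟩ := hTseq z
    have hamono := monotone_of_wb haWB
    have hbmono := monotone_of_wb hbWB
    have hemono := monotone_of_wb heWB
    obtain ⟨N, hN⟩ : ∃ N, (x' : S) ≤ a N := by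
      obtain ⟨n, hn⟩ := hx (fun n => (⟨a n, hBT' _ (haB n)⟩ : ↥T))
        (fun i j hij => Subtype.coe_le_coe.mp (hamono hij)) x (isLUB_subtype_of_coe haL) le_rfl
      exact ⟨n, hn⟩
    obtain ⟨M, hM⟩ : ∃ M, (y' : S) ≤ b M := by
      obtain ⟨n, hn⟩ := hy (fun n => (⟨b n, hBT' _ (hbB n)⟩ : ↥T))
        (fun i j hij => Subtype.coe_le_coe.mp (hbmono hij)) y (isLUB_subtype_of_coe hbL) le_rfl
      exact ⟨n, hn⟩
    have hxyzS : (x : S) + (y : S) ≤ (z : S) := Subtype.coe_le_coe.mpr hxyz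
    have haxz : ∀ n, a n ≤ (x : S) := fun n => haL.1 ⟨n, rfl⟩
    have hbyz : ∀ n, b n ≤ (y : S) := fun n => hbL.1 ⟨n, rfl⟩
    have hez : ∀ n, e n ≤ (z : S) := fun n => heL.1 ⟨n, rfl⟩
    -- the decreasing interpolation chain below a (N+1), above x'
    have huex : ∀ v : S, ∃ v', WayBelow ((x' : S)) v →
        WayBelow ((x' : S)) v' ∧ WayBelow v' v ∧ (v ∈ B → v' ∈ B) := by
      intro v
      by_cases h : WayBelow ((x' : S)) v
      · obtain ⟨n, hn⟩ := h (appr v) (happrmono v) v (happrLUB v) le_rfl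
        exact ⟨appr v (n+1), fun _ => ⟨le_wayBelow hn (happrWB v n),
          wayBelow_le_trans (happrWB v (n+1)) (happrle v (n+2)), fun hv => hBappr v (n+1) hv⟩⟩
      · exact ⟨0, fun h' => absurd h' h⟩
    choose uf huf using huex
    set u : ℕ → S := fun k => uf^[k] (a (N+1)) with hu
    have husucc : ∀ k, u (k+1) = uf (u k) := fun k => Function.iterate_succ_apply' uf k _
    have huP : ∀ k, WayBelow ((x' : S)) (u k) ∧ u k ∈ B := by
      intro k
      induction k with
      | zero => exact ⟨le_wayBelow hN (haWB N), haB (N+1)⟩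
      | succ k ih =>
        have h := huf (u k) ih.1
        rw [husucc k]
        exact ⟨h.1, h.2.2 ih.2⟩
    have hudown : ∀ k, WayBelow (u (k+1)) (u k) := by
      intro k
      have h := huf (u k) (huP k).1
      rw [husucc k]
      exact h.2.1
    have hux' : ∀ k, (x' : S) ≤ u k := fun k => wayBelow_le (huP k).1
    have huB : ∀ k, u k ∈ B := fun k => (huP k).2
    have hule : ∀ k, u k ≤ a (N+1) := by
      intro k
      induction k with
      | zero => exact le_rfl
      | succ k ih => exact (wayBelow_le (hudown k)).trans ih
    have hulex : ∀ k, u k ≤ (x : S) := fun k => (hule k).trans (haxz (N+1))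
    -- initial witness
    obtain ⟨β₀, hβ₀⟩ : ∃ β₀, u 1 + b (M+2) ≤ e β₀ := by
      have hwb : WayBelow (u 1 + b (M+2)) (u 0 + b (M+3)) :=
        CuSemigroup.wb_add _ _ _ _ (hudown 0) (hbWB (M+2))
      exact hwb e hemono (z : S) heL
        ((cu_add_le_add (hulex 0) (hbyz (M+3))).trans hxyzS)
    set d0 := w (u 2) (u 1) (b (M+1)) (b (M+2)) (e β₀) with hd0
    have hd0spec := hwspec (u 2) (u 1) (b (M+1)) (b (M+2)) (e β₀) ⟨hβ₀, hudown 1, hbWB (M+1)⟩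
    have hd0B : d0 ∈ B := hBw _ _ _ _ _ (huB 2) (huB 1) (hbB (M+1)) (hbB (M+2)) (heB β₀)
    obtain ⟨n₀, hn₀⟩ := hd0spec.2.2 (appr d0) (happrmono d0) d0 (happrLUB d0) le_rfl
    set c0 := appr d0 (n₀+1) with hc0
    have hc0B : c0 ∈ B := hBappr _ _ hd0B
    have hbMc0 : b (M+1) ≤ c0 := hn₀.trans (happrmono d0 (Nat.le_succ n₀))
    have hc0d0 : WayBelow c0 d0 := wayBelow_le_trans (happrWB d0 (n₀+1)) (happrle d0 (n₀+2))
    have hinv0 : u 2 + d0 ≤ e β₀ := hd0spec.1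
    -- one step of the recursion
    have hstepO5 : ∀ (j : ℕ) (c d : S), c ∈ B → d ∈ B → WayBelow c d →
        u (2*j+2) + d ≤ e (β₀+j) →
        ∃ c' d' : S, c' ∈ B ∧ d' ∈ B ∧ WayBelow c c' ∧ WayBelow c' d' ∧
          u (2*j+4) + d' ≤ e (β₀+j+1) ∧ e (β₀+j) ≤ u (2*j+3) + c' := by
      intro j c d hcB hdB hcd hinv
      have hle1 : u (2*j+3) + d ≤ e (β₀+j+1) :=
        (cu_add_le_add (wayBelow_le (hudown (2*j+2))) le_rfl).trans
          (hinv.trans (hemono (Nat.le_succ _)))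
      have hspec := hwspec (u (2*j+4)) (u (2*j+3)) c d (e (β₀+j+1))
        ⟨hle1, hudown (2*j+3), hcd⟩
      set d' := w (u (2*j+4)) (u (2*j+3)) c d (e (β₀+j+1)) with hd'
      have hd'B : d' ∈ B := hBw _ _ _ _ _ (huB _) (huB _) hcB hdB (heB _)
      have hlub : IsLUB (Set.range fun m => u (2*j+3) + appr d' m) (u (2*j+3) + d') :=
        isLUB_const_add (happrmono d') (happrLUB d')
      obtain ⟨m₁, hm₁⟩ := heWB (β₀+j) (fun m => u (2*j+3) + appr d' m)
        (fun i k hik => cu_add_le_add le_rfl (happrmono d' hik)) _ hlub hspec.2.1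
      obtain ⟨n₁, hn₁⟩ := hspec.2.2 (appr d') (happrmono d') d' (happrLUB d') le_rfl
      refine ⟨appr d' (max n₁ m₁ + 1), d', hBappr _ _ hd'B, hd'B, ?_, ?_, hspec.1, ?_⟩
      · exact le_wayBelow (hn₁.trans (happrmono d' (le_max_left _ _))) (happrWB d' (max n₁ m₁))
      · exact wayBelow_le_trans (happrWB d' (max n₁ m₁ + 1)) (happrle d' _)
      · exact hm₁.trans (cu_add_le_add le_rfl
          (happrmono d' ((le_max_right n₁ m₁).trans (Nat.le_succ _))))
    have hstep' : ∀ (p : S × S) (j : ℕ), ∃ p' : S × S,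
        (p.1 ∈ B ∧ p.2 ∈ B ∧ WayBelow p.1 p.2 ∧ u (2*j+2) + p.2 ≤ e (β₀+j)) →
        (p'.1 ∈ B ∧ p'.2 ∈ B ∧ WayBelow p.1 p'.1 ∧ WayBelow p'.1 p'.2 ∧
          u (2*j+4) + p'.2 ≤ e (β₀+j+1) ∧ e (β₀+j) ≤ u (2*j+3) + p'.1) := by
      intro p j
      by_cases h : p.1 ∈ B ∧ p.2 ∈ B ∧ WayBelow p.1 p.2 ∧ u (2*j+2) + p.2 ≤ e (β₀+j)
      · obtain ⟨c', d', h1, h2, h3, h4, h5', h6⟩ :=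
          hstepO5 j p.1 p.2 h.1 h.2.1 h.2.2.1 h.2.2.2
        exact ⟨(c', d'), fun _ => ⟨h1, h2, h3, h4, h5', h6⟩⟩
      · exact ⟨(0, 0), fun h' => absurd h' h⟩
    choose st hst using hstep'
    set G : ℕ → S × S := fun j => Nat.rec (c0, d0) (fun j p => st p j) j with hG
    have hGsucc : ∀ j, G (j+1) = st (G j) j := fun j => rfl
    have hGinv : ∀ j, (G j).1 ∈ B ∧ (G j).2 ∈ B ∧ WayBelow (G j).1 (G j).2 ∧
        u (2*j+2) + (G j).2 ≤ e (β₀+j) := by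
      intro j
      induction j with
      | zero =>
        refine ⟨hc0B, hd0B, hc0d0, ?_⟩
        have h1 : 2*0+2 = 2 := by norm_num
        rw [h1, Nat.add_zero]
        exact hinv0
      | succ j ih =>
        have h := hst (G j) j ih
        rw [hGsucc j]
        refine ⟨h.1, h.2.1, h.2.2.2.1, ?_⟩
        have harith : 2*(j+1)+2 = 2*j+4 := by omega
        have harith2 : β₀+(j+1) = β₀+j+1 := by omega
        rw [harith, harith2]
        exact h.2.2.2.2.1
    have hchain : ∀ j, WayBelow (G j).1 (G (j+1)).1 := by
      intro j
      have h := hst (G j) j (hGinv j)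
      rw [hGsucc j]
      exact h.2.2.1
    have hcov : ∀ j, e (β₀+j) ≤ u (2*j+3) + (G (j+1)).1 := by
      intro j
      have h := hst (G j) j (hGinv j)
      rw [hGsucc j]
      exact h.2.2.2.2.2
    set C : ℕ → S := fun j => (G j).1 with hC
    have hCB : ∀ j, C j ∈ B := fun j => (hGinv j).1
    have hCmono : Monotone C := monotone_of_wb hchain
    obtain ⟨cS, hcS⟩ := CuSemigroup.exists_sup C hCmono
    have hcT' : cS ∈ T' := ⟨C, hCB, hchain, hcS⟩
    refine ⟨⟨cS, hcT'⟩, ?_, ?_, ?_⟩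
    · apply Subtype.coe_le_coe.mp
      show (x' : S) + cS ≤ (z : S)
      have hlub := isLUB_const_add (c := (x' : S)) hCmono hcS
      apply hlub.2
      rintro _ ⟨j, rfl⟩
      calc (x' : S) + C j ≤ u (2*j+2) + (G j).2 :=
            cu_add_le_add (hux' _) (wayBelow_le (hGinv j).2.2.1)
        _ ≤ e (β₀+j) := (hGinv j).2.2.2
        _ ≤ (z : S) := hez _
    · apply Subtype.coe_le_coe.mp
      show (z : S) ≤ (x : S) + cS
      apply heL.2
      rintro _ ⟨γ, rfl⟩
      calc e γ ≤ e (β₀+γ) := hemono (by omega)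
        _ ≤ u (2*γ+3) + C (γ+1) := hcov γ
        _ ≤ (x : S) + cS := cu_add_le_add (hulex _) (hcS.1 ⟨γ+1, rfl⟩)
    · apply hwbST
      exact le_wayBelow hM
        (wayBelow_le_trans (hbWB M) (hbMc0.trans (hcS.1 ⟨0, rfl⟩)))
  exact ⟨T, ⟨hCuT, hLUBdown, hwbTS⟩, hCB, hO5T, hT0T⟩
end

section
/- Let S be a Cu-semigroup and let (x_n) be an increasing sequence in S such that each x_n is the supremum of a ≪-increasing sequence of elements of a subset T ⊆ S. Then sup_n x_n is also the supremum of a ≪-increasing sequence of elements of T. -/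
lemma WayBelow.le {S : Type*} [PartialOrder S] {x y : S} (h : WayBelow x y) : x ≤ y := by
  obtain ⟨n, hn⟩ := h (fun _ => y) monotone_const y
    ⟨fun a ha => by rcases ha with ⟨k, rfl⟩; exact le_rfl,
     fun a ha => ha ⟨0, rfl⟩⟩ le_rfl
  exact hn

lemma WayBelow.trans_le {S : Type*} [PartialOrder S] {x y z : S}
    (h : WayBelow x y) (hyz : y ≤ z) : WayBelow x z :=
  fun f hf w hw hzw => h f hf w hw (hyz.trans hzw)

theorem sup_mem_derivedSet {S : Type*} [AddCommMonoid S] [PartialOrder S] [CuSemigroup S]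
    (T : Set S) (x : ℕ → S) (hmono : Monotone x)
    (hx : ∀ n, x n ∈ cuDerivedSet T) (s : S) (hs : IsLUB (Set.range x) s) :
    s ∈ cuDerivedSet T := by
  classical
  -- extract the rows
  choose f hfT hfwb hflub using hx
  have hfmono : ∀ n, Monotone (f n) := fun n =>
    monotone_nat_of_le_succ fun k => (hfwb n k).le
  have hle_x : ∀ n k, f n k ≤ x n := fun n k => (hflub n).1 ⟨k, rfl⟩
  -- key step: given k and mk, find a good next index
  have key : ∀ k mk : ℕ, ∃ m' : ℕ,
      f k (mk + 1) ≤ f (k + 1) m' ∧ ∀ j ≤ k, f j k ≤ f (k + 1) m' := by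
    intro k mk
    have hget : ∀ (j i : ℕ), j ≤ k + 1 → ∃ m, f j i ≤ f (k + 1) m := by
      intro j i hj
      exact (hfwb j i) (f (k + 1)) (hfmono (k + 1)) (x (k + 1)) (hflub (k + 1))
        ((hle_x j (i + 1)).trans (hmono hj))
    choose idx hidx using fun j (hj : j ≤ k) => hget j k (hj.trans (Nat.le_succ k))
    obtain ⟨m0, hm0⟩ := hget k (mk + 1) (Nat.le_succ k)
    refine ⟨max m0 ((Finset.range (k + 1)).sup fun j => if h : j ≤ k then idx j h else 0),
      hm0.trans (hfmono (k + 1) (le_max_left _ _)), fun j hj => ?_⟩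
    refine (hidx j hj).trans (hfmono (k + 1) ?_)
    refine le_trans ?_ (le_max_right _ _)
    have : j ∈ Finset.range (k + 1) := Finset.mem_range.mpr (Nat.lt_succ_of_le hj)
    calc idx j hj = (fun j' => if h : j' ≤ k then idx j' h else 0) j := by simp [hj]
      _ ≤ _ := Finset.le_sup (f := fun j' => if h : j' ≤ k then idx j' h else 0) this
  -- recursively build the index sequence
  let m : ℕ → ℕ := fun k => Nat.rec 0 (fun k mk => Classical.choose (key k mk)) k
  have hmspec : ∀ k, f k (m k + 1) ≤ f (k + 1) (m (k + 1)) ∧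
      ∀ j ≤ k, f j k ≤ f (k + 1) (m (k + 1)) := fun k =>
    Classical.choose_spec (key k (m k))
  set g : ℕ → S := fun k => f k (m k) with hg
  refine ⟨g, fun k => hfT k (m k), fun k => ?_, ?_⟩
  · exact ((hfwb k (m k)).trans_le (hmspec k).1)
  · constructor
    · rintro a ⟨k, rfl⟩
      exact (hle_x k (m k)).trans (hs.1 ⟨k, rfl⟩)
    · intro u hu
      refine hs.2 fun a ha => ?_
      rcases ha with ⟨n, rfl⟩
      refine (hflub n).2 fun b hb => ?_
      rcases hb with ⟨j, rfl⟩
      have hk : f n j ≤ f n (max n j) := hfmono n (le_max_right n j)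
      have := (hmspec (max n j)).2 n (le_max_left n j)
      exact hk.trans (this.trans (hu ⟨max n j + 1, rfl⟩))
end
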